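/- Let α ∈ (0,1), let u : ℝ^d × ℝ → ℝ be bounded and continuous, and let ρ be a parabolic mollifier. Then there is a constant C = C(d, α, ρ) such that [u]_α ≤ C sup_{τ > 0} ( τ^{1−α} sup |∇_x u_τ| + τ^{2−α} sup |∂_t u_τ| ), where u_τ is the parabolic mollification of u at scale τ and [u]_α is the parabolic Hölder seminorm. In particular, finiteness of the right-hand side implies u is α-Hölder continuous with respect to the parabolic distance. -/

import Mathlib

open MeasureTheory Real Convolution ContDiff

/-- Parabolic mollification: `u_τ(x,t) = ∬ ρ_τ(x-y, t-s) u(y,s) dy ds` with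
`ρ_τ(x,t) = τ^{-(d+2)} ρ(x/τ, t/τ²)`. -/
noncomputable def pmoll (d : ℕ) (ρ u : EuclideanSpace ℝ (Fin d) × ℝ → ℝ) (τ : ℝ)
    (p : EuclideanSpace ℝ (Fin d) × ℝ) : ℝ :=
  ∫ q : EuclideanSpace ℝ (Fin d) × ℝ,
    (τ ^ (d + 2))⁻¹ * ρ (τ⁻¹ • (p.1 - q.1), (p.2 - q.2) / τ ^ 2) * u q

/-- Parabolic distance `d(X,Y) = max {|x-y|, |t-s|^{1/2}}`. -/
noncomputable def pdistP (d : ℕ) (X Y : EuclideanSpace ℝ (Fin d) × ℝ) : ℝ :=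
  max ‖X.1 - Y.1‖ (Real.sqrt |X.2 - Y.2|)

namespace Stmt8Aux

variable {d : ℕ}
local notation "E" => EuclideanSpace ℝ (Fin d)

instance : Measure.IsAddHaarMeasure (volume : Measure (E × ℝ)) :=
  Measure.prod.instIsAddHaarMeasure _ _

instance : Measure.IsNegInvariant (volume : Measure (E × ℝ)) := by
  constructor
  rw [Measure.neg, show (Neg.neg : E × ℝ → E × ℝ) = Prod.map Neg.neg Neg.neg from rfl,
    Measure.volume_eq_prod, ← Measure.map_prod_map _ _ measurable_neg measurable_neg,
    Measure.map_neg_eq_self, Measure.map_neg_eq_self]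

/-- scaled mollifier -/
noncomputable def smol (d : ℕ) (ρ : EuclideanSpace ℝ (Fin d) × ℝ → ℝ) (τ : ℝ)
    (z : EuclideanSpace ℝ (Fin d) × ℝ) : ℝ :=
  (τ ^ (d + 2))⁻¹ * ρ (τ⁻¹ • z.1, z.2 / τ ^ 2)

/-- anisotropic scaling homeomorphism -/
noncomputable def scmap (d : ℕ) (τ : ℝ) (hτ : τ ≠ 0) :
    (EuclideanSpace ℝ (Fin d) × ℝ) ≃ₜ (EuclideanSpace ℝ (Fin d) × ℝ) :=
  (Homeomorph.smulOfNeZero τ⁻¹ (inv_ne_zero hτ)).prodCongr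
    (Homeomorph.mulRight₀ (τ ^ 2)⁻¹ (inv_ne_zero (pow_ne_zero 2 hτ)))

lemma scmap_apply (τ : ℝ) (hτ : τ ≠ 0) (z : E × ℝ) :
    scmap d τ hτ z = (τ⁻¹ • z.1, z.2 / τ ^ 2) := by
  simp [scmap, Homeomorph.prodCongr, div_eq_mul_inv, Prod.map]

lemma smol_contDiff {ρ : E × ℝ → ℝ} (hρ : ContDiff ℝ (⊤ : ℕ∞) ρ) (τ : ℝ) :
    ContDiff ℝ (⊤ : ℕ∞) (smol d ρ τ) :=
  contDiff_const.mul (hρ.comp (ContDiff.prodMk (contDiff_fst.const_smul τ⁻¹) (contDiff_snd.div_const _)))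

lemma smol_cpt {ρ : E × ℝ → ℝ} (hρc : HasCompactSupport ρ) {τ : ℝ} (hτ : τ ≠ 0) :
    HasCompactSupport (smol d ρ τ) := by
  have h : smol d ρ τ = (fun z => (τ ^ (d + 2))⁻¹ * ρ z) ∘ (scmap d τ hτ) := by
    funext z; simp [smol, scmap_apply]
  rw [h]
  exact (hρc.mul_left).comp_isClosedEmbedding (scmap d τ hτ).isClosedEmbedding

lemma smol_cont {ρ : E × ℝ → ℝ} (hρ : ContDiff ℝ (⊤ : ℕ∞) ρ) (τ : ℝ) :
    Continuous (smol d ρ τ) := (smol_contDiff hρ τ).continuous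

/-- change of variables for the anisotropic scaling -/
lemma integral_scaled (f : E × ℝ → ℝ) (hf : Continuous f) (hfc : HasCompactSupport f)
    {τ : ℝ} (hτ : 0 < τ) :
    ∫ z : E × ℝ, f (τ⁻¹ • z.1, z.2 / τ ^ 2) = τ ^ (d + 2) * ∫ z, f z := by
  have hτ0 : τ ≠ 0 := ne_of_gt hτ
  have hcomp : Continuous fun z : E × ℝ => f (τ⁻¹ • z.1, z.2 / τ ^ 2) :=
    hf.comp ((continuous_fst.const_smul τ⁻¹).prodMk (continuous_snd.div_const _))
  have hcompc : HasCompactSupport fun z : E × ℝ => f (τ⁻¹ • z.1, z.2 / τ ^ 2) := by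
    have h : (fun z : E × ℝ => f (τ⁻¹ • z.1, z.2 / τ ^ 2)) = f ∘ (scmap d τ hτ0) := by
      funext z; simp [scmap_apply]
    rw [h]; exact hfc.comp_isClosedEmbedding (scmap d τ hτ0).isClosedEmbedding
  have hint : Integrable (fun z : E × ℝ => f (τ⁻¹ • z.1, z.2 / τ ^ 2)) volume :=
    hcomp.integrable_of_hasCompactSupport hcompc
  have hintf : Integrable f volume := hf.integrable_of_hasCompactSupport hfc
  rw [Measure.volume_eq_prod] at hint hintf ⊢
  rw [integral_prod _ hint, integral_prod _ hintf]
  have inner : ∀ x : E, ∫ t : ℝ, f (τ⁻¹ • x, t / τ ^ 2) = (τ ^ 2) • ∫ t : ℝ, f (τ⁻¹ • x, t) := by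
    intro x
    rw [MeasureTheory.Measure.integral_comp_div (fun t => f (τ⁻¹ • x, t)) (τ ^ 2)]
    rw [abs_of_pos (by positivity)]
  simp_rw [inner]
  rw [integral_smul]
  have outer : ∫ x : E, ∫ t : ℝ, f (τ⁻¹ • x, t) =
      (τ ^ d) • ∫ x : E, ∫ t : ℝ, f (x, t) := by
    have := MeasureTheory.Measure.integral_comp_inv_smul (volume : Measure E)
      (fun x : E => ∫ t : ℝ, f (x, t)) τ
    rw [this, finrank_euclideanSpace_fin, abs_of_pos (by positivity)]
  rw [outer, smul_smul, smul_eq_mul]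
  ring

lemma smol_integral {ρ : E × ℝ → ℝ} (hρ : ContDiff ℝ (⊤ : ℕ∞) ρ) (hρc : HasCompactSupport ρ)
    (hρi : ∫ p : E × ℝ, ρ p = 1) {τ : ℝ} (hτ : 0 < τ) :
    ∫ z, smol d ρ τ z = 1 := by
  unfold smol
  rw [integral_const_mul, integral_scaled ρ hρ.continuous hρc hτ, hρi]
  field_simp

lemma smol_abs_integral {ρ : E × ℝ → ℝ} (hρ : ContDiff ℝ (⊤ : ℕ∞) ρ) (hρc : HasCompactSupport ρ) {τ : ℝ} (hτ : 0 < τ) :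
    ∫ z, |smol d ρ τ z| = ∫ z, |ρ z| := by
  have habs : Continuous fun z : E × ℝ => |ρ z| := hρ.continuous.abs
  have habsc : HasCompactSupport fun z : E × ℝ => |ρ z| := by
    apply HasCompactSupport.intro hρc
    intro z hz
    simp [image_eq_zero_of_notMem_tsupport hz]
  have h : ∀ z : E × ℝ, |smol d ρ τ z| =
      (τ ^ (d + 2))⁻¹ * |ρ (τ⁻¹ • z.1, z.2 / τ ^ 2)| := by
    intro z
    rw [smol, abs_mul, abs_of_nonneg (by positivity)]
  simp_rw [h]
  rw [integral_const_mul, integral_scaled (fun z => |ρ z|) habs habsc hτ]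
  rw [← mul_assoc, inv_mul_cancel₀ (by positivity), one_mul]

lemma pmoll_eq_conv {ρ u : E × ℝ → ℝ} (τ : ℝ) :
    pmoll d ρ u τ = (u ⋆[ContinuousLinearMap.mul ℝ ℝ] smol d ρ τ) := by
  funext p
  rw [convolution_def, pmoll]
  congr 1
  funext q
  simp only [ContinuousLinearMap.mul_apply', smol, Prod.fst_sub, Prod.snd_sub]
  ring

lemma pmoll_eq_int {ρ u : E × ℝ → ℝ} (hu : Continuous u) (τ : ℝ) (p : E × ℝ) :
    pmoll d ρ u τ p = ∫ z, smol d ρ τ z * u (p - z) := by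
  rw [pmoll_eq_conv, convolution_def]
  have := integral_sub_left_eq_self (fun z => smol d ρ τ z * u (p - z)) volume p
  rw [← this]
  congr 1
  funext q
  simp only [sub_sub_cancel, ContinuousLinearMap.mul_apply']
  ring

/-- There is `R ≥ 1` such that the support of `smol τ` is contained in the parabolic box
`‖z.1‖ ≤ τR`, `|z.2| ≤ τ²R`. -/
lemma smol_support_bound {ρ : E × ℝ → ℝ} (hρc : HasCompactSupport ρ) :
    ∃ R : ℝ, 1 ≤ R ∧ ∀ {τ : ℝ}, 0 < τ → ∀ z : E × ℝ, smol d ρ τ z ≠ 0 →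
      ‖z.1‖ ≤ τ * R ∧ |z.2| ≤ τ ^ 2 * R := by
  obtain ⟨R₀, hR₀⟩ := hρc.isCompact.isBounded.subset_closedBall 0
  refine ⟨max R₀ 1, le_max_right _ _, ?_⟩
  intro τ hτ z hz
  have hρz : ρ (τ⁻¹ • z.1, z.2 / τ ^ 2) ≠ 0 := by
    intro h; apply hz; simp [smol, h]
  have hmem : (τ⁻¹ • z.1, z.2 / τ ^ 2) ∈ Metric.closedBall (0 : E × ℝ) R₀ :=
    hR₀ (subset_tsupport ρ hρz)
  rw [Metric.mem_closedBall, dist_zero_right, Prod.norm_def] at hmem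
  have h1 : ‖τ⁻¹ • z.1‖ ≤ R₀ := le_trans (le_max_left _ _) hmem
  have h2 : ‖z.2 / τ ^ 2‖ ≤ R₀ := le_trans (le_max_right _ _) hmem
  rw [norm_smul, norm_inv, Real.norm_eq_abs, abs_of_pos hτ] at h1
  rw [Real.norm_eq_abs, abs_div, abs_of_pos (by positivity : (0:ℝ) < τ ^ 2)] at h2
  constructor
  · rw [inv_mul_eq_div, div_le_iff₀ hτ] at h1
    calc ‖z.1‖ ≤ R₀ * τ := h1
    _ ≤ τ * max R₀ 1 := by nlinarith [le_max_left R₀ (1:ℝ)]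
  · rw [div_le_iff₀ (by positivity : (0:ℝ) < τ ^ 2)] at h2
    calc |z.2| ≤ R₀ * τ ^ 2 := h2
    _ ≤ τ ^ 2 * max R₀ 1 := by nlinarith [le_max_left R₀ (1:ℝ), sq_nonneg τ]

/-- key estimate: mollifying a continuous function moves it by at most `(∫|ρ|) * B`
if `B` bounds the oscillation over the support of the kernel. -/
lemma near_est {ρ : E × ℝ → ℝ} (hρ : ContDiff ℝ (⊤ : ℕ∞) ρ) (hρc : HasCompactSupport ρ)
    (hρi : ∫ p : E × ℝ, ρ p = 1) {τ : ℝ} (hτ : 0 < τ)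
    {v : E × ℝ → ℝ} (hv : Continuous v) (p : E × ℝ) {B : ℝ}
    (hB : ∀ z : E × ℝ, smol d ρ τ z ≠ 0 → |v (p - z) - v p| ≤ B) :
    |(∫ z, smol d ρ τ z * v (p - z)) - v p| ≤ (∫ z, |ρ z|) * B := by
  have hsc : Continuous (smol d ρ τ) := smol_cont hρ τ
  have hscpt : HasCompactSupport (smol d ρ τ) := smol_cpt hρc hτ.ne'
  have hint1 : Integrable (fun z => smol d ρ τ z * (v (p - z) - v p)) volume := by
    apply Continuous.integrable_of_hasCompactSupport
    · exact hsc.mul ((hv.comp (continuous_const.sub continuous_id)).sub continuous_const)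
    · apply HasCompactSupport.intro hscpt.isCompact
      intro z hz
      simp [image_eq_zero_of_notMem_tsupport hz]
  have habs : Integrable (fun z : E × ℝ => |smol d ρ τ z| * B) volume := by
    apply Integrable.mul_const
    exact (hsc.integrable_of_hasCompactSupport hscpt).abs
  have h1 : Integrable (fun z => smol d ρ τ z * v (p - z)) volume := by
    apply Continuous.integrable_of_hasCompactSupport
    · exact hsc.mul (hv.comp (continuous_const.sub continuous_id))
    · apply HasCompactSupport.intro hscpt.isCompact
      intro z hz
      simp [image_eq_zero_of_notMem_tsupport hz]
  have h2 : Integrable (fun z => smol d ρ τ z * v p) volume :=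
    (hsc.integrable_of_hasCompactSupport hscpt).mul_const _
  have heq : (∫ z, smol d ρ τ z * v (p - z)) - v p
      = ∫ z, smol d ρ τ z * (v (p - z) - v p) := by
    have e : (fun z => smol d ρ τ z * (v (p - z) - v p))
        = fun z => smol d ρ τ z * v (p - z) - smol d ρ τ z * v p := by
      funext z; ring
    rw [e, integral_sub h1 h2, integral_mul_const,
      smol_integral hρ hρc hρi hτ, one_mul]
  rw [heq]
  have habs2 : Integrable (fun z => |smol d ρ τ z| * |v (p - z) - v p|) volume := by
    have := hint1.abs
    simpa [abs_mul] using this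
  calc |∫ z, smol d ρ τ z * (v (p - z) - v p)|
      ≤ ∫ z, |smol d ρ τ z| * |v (p - z) - v p| := by
        simpa [Real.norm_eq_abs, abs_mul] using
          norm_integral_le_integral_norm (μ := volume)
            (fun z => smol d ρ τ z * (v (p - z) - v p))
    _ ≤ ∫ z, |smol d ρ τ z| * B := by
        apply integral_mono habs2 habs
        intro z
        by_cases hz : smol d ρ τ z = 0
        · simp [hz]
        · exact mul_le_mul_of_nonneg_left (hB z hz) (abs_nonneg _)
    _ = (∫ z, |ρ z|) * B := by
        rw [integral_mul_const, smol_abs_integral hρ hρc hτ]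

lemma pmoll_contDiff {ρ u : E × ℝ → ℝ} (hρ : ContDiff ℝ (⊤ : ℕ∞) ρ) (hρc : HasCompactSupport ρ)
    (hu : Continuous u) {τ : ℝ} (hτ : 0 < τ) :
    ContDiff ℝ ∞ (pmoll d ρ u τ) := by
  rw [pmoll_eq_conv]
  exact HasCompactSupport.contDiff_convolution_right (𝕜 := ℝ)
    (ContinuousLinearMap.mul ℝ ℝ) (smol_cpt hρc hτ.ne')
    (hu.locallyIntegrable) ((smol_contDiff hρ τ).of_le (by simp))

/-- commutation of mollifications at two scales -/
lemma pmoll_comm {ρ u : E × ℝ → ℝ} (hρ : ContDiff ℝ (⊤ : ℕ∞) ρ) (hρc : HasCompactSupport ρ)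
    (hu : Continuous u) {σ τ : ℝ} (hσ : 0 < σ) (hτ : 0 < τ) (p : E × ℝ) :
    ∫ z, smol d ρ σ z * pmoll d ρ u τ (p - z)
      = ∫ z, smol d ρ τ z * pmoll d ρ u σ (p - z) := by
  have key : ∀ {a b : ℝ}, 0 < a → 0 < b →
      ∫ z, smol d ρ a z * pmoll d ρ u b (p - z)
        = ∫ z, ∫ q, smol d ρ a z * smol d ρ b q * u (p - z - q) := by
    intro a b ha hb
    congr 1; funext z
    rw [pmoll_eq_int hu, ← integral_const_mul]
    congr 1; funext q; ring
  rw [key hσ hτ, key hτ hσ]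
  have hint : Integrable (Function.uncurry fun z q : E × ℝ =>
      smol d ρ σ z * smol d ρ τ q * u (p - z - q)) (volume.prod volume) := by
    apply Continuous.integrable_of_hasCompactSupport
    · apply Continuous.mul
      · exact ((smol_cont hρ σ).comp continuous_fst).mul ((smol_cont hρ τ).comp continuous_snd)
      · exact hu.comp (by fun_prop)
    · apply HasCompactSupport.intro
        (((smol_cpt hρc hσ.ne').isCompact).prod ((smol_cpt hρc hτ.ne').isCompact))
      rintro ⟨z, q⟩ hzq
      simp only [Set.mem_prod, not_and_or] at hzq
      rcases hzq with h | h
      · simp [Function.uncurry, image_eq_zero_of_notMem_tsupport h]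
      · simp [Function.uncurry, image_eq_zero_of_notMem_tsupport h]
  have swap := integral_integral_swap hint
  rw [swap]
  congr 1; funext z
  congr 1; funext q
  rw [show p - q - z = p - z - q from by abel]
  ring

end Stmt8Aux

lemma geo_aux {q : ℝ} (h0 : 0 < q) (h1 : q < 1) (n : ℕ) :
    ∑ k ∈ Finset.range n, q ^ (k + 1) ≤ (1 - q)⁻¹ := by
  have hq1 : q ≠ 1 := ne_of_lt h1
  have h1q : 0 < 1 - q := by linarith
  have hpow : 0 ≤ q ^ n := by positivity
  have hpow1 : q ^ n ≤ 1 := pow_le_one₀ h0.le h1.le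
  have e : ∑ k ∈ Finset.range n, q ^ (k + 1) = q * ∑ k ∈ Finset.range n, q ^ k := by
    rw [Finset.mul_sum]
    exact Finset.sum_congr rfl fun k _ => by ring
  rw [e, geom_sum_eq hq1 n]
  have e2 : (q ^ n - 1) / (q - 1) = (1 - q ^ n) / (1 - q) := by
    rw [← neg_div_neg_eq, neg_sub, neg_sub]
  rw [e2, inv_eq_one_div, mul_div_assoc']
  rw [div_le_div_iff₀ h1q h1q]
  have h3 : q * (1 - q ^ n) ≤ 1 := by nlinarith
  nlinarith


open Stmt8Aux ContDiff

/-- Left-hand inequality of the parabolic norm-equivalence lemma: for bounded continuous `u`,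
`[u]_α ≤ C sup_{τ>0} (τ^{1-α} sup |∇_x u_τ| + τ^{2-α} sup |∂_t u_τ|)` with `C = C(d,α,ρ)`.
(The bound `K` on the right-hand supremum is expressed via two arbitrary points `X`, `Y`.) -/
theorem stmt8 (d : ℕ) (α : ℝ) (hα : α ∈ Set.Ioo (0 : ℝ) 1)
    (ρ : EuclideanSpace ℝ (Fin d) × ℝ → ℝ)
    (hρ_smooth : ContDiff ℝ (⊤ : ℕ∞) ρ) (hρ_cpt : HasCompactSupport ρ)
    (hρ_int : ∫ p : EuclideanSpace ℝ (Fin d) × ℝ, ρ p = 1) :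
    ∃ C > 0, ∀ u : EuclideanSpace ℝ (Fin d) × ℝ → ℝ, Continuous u →
      (∃ M, ∀ p, |u p| ≤ M) →
      ∀ K : ℝ,
      (∀ τ > 0, ∀ X Y : EuclideanSpace ℝ (Fin d) × ℝ,
        τ ^ ((1 : ℝ) - α) * ‖fderiv ℝ (fun y => pmoll d ρ u τ (y, X.2)) X.1‖
          + τ ^ ((2 : ℝ) - α) * |deriv (fun s => pmoll d ρ u τ (Y.1, s)) Y.2| ≤ K) →
      ∀ X Y, |u X - u Y| ≤ C * K * pdistP d X Y ^ α := by
  obtain ⟨hα0, hα1⟩ := hα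
  obtain ⟨R, hR1, hRsup⟩ := smol_support_bound (d := d) hρ_cpt
  have hR0 : (0:ℝ) < R := lt_of_lt_of_le one_pos hR1
  set I := ∫ z : EuclideanSpace ℝ (Fin d) × ℝ, |ρ z| with hIdef
  have hI1 : (1:ℝ) ≤ I := by
    have h := norm_integral_le_integral_norm
      (μ := (volume : Measure (EuclideanSpace ℝ (Fin d) × ℝ))) ρ
    rw [hρ_int] at h
    simpa [Real.norm_eq_abs, hIdef] using h
  have hI0 : (0:ℝ) < I := lt_of_lt_of_le one_pos hI1
  have h2α : 1 < (2:ℝ) ^ α := by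
    rw [Real.one_lt_rpow_iff_of_pos (by norm_num)]
    exact Or.inl ⟨one_lt_two, hα0⟩
  set Q := ((2:ℝ) ^ α)⁻¹ with hQdef
  have hQ0 : 0 < Q := by positivity
  have hQ1 : Q < 1 := by rw [hQdef]; exact inv_lt_one_of_one_lt₀ h2α
  have h1Q : 0 < 1 - Q := by linarith
  set S := (1 - Q)⁻¹ with hSdef
  have hS0 : 0 < S := inv_pos.mpr h1Q
  set C1 := 8 * I * R * S with hC1def
  have hC1 : 0 < C1 := by positivity
  refine ⟨2 * C1 + 2, by linarith, ?_⟩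
  intro u hu _hbd K HK
  have hK0 : 0 ≤ K := le_trans (by positivity) (HK 1 one_pos (0, 0) (0, 0))
  -- slice derivative bounds
  have hgrad : ∀ τ : ℝ, 0 < τ → ∀ x : EuclideanSpace ℝ (Fin d), ∀ t : ℝ,
      ‖fderiv ℝ (fun y => pmoll d ρ u τ (y, t)) x‖ ≤ K * τ ^ (α - 1) := by
    intro τ hτ x t
    have h := HK τ hτ (x, t) (x, t)
    have h2 : 0 ≤ τ ^ ((2:ℝ) - α) * |deriv (fun s => pmoll d ρ u τ (x, s)) t| :=
      mul_nonneg (Real.rpow_nonneg hτ.le _) (abs_nonneg _)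
    have h1 : ‖fderiv ℝ (fun y => pmoll d ρ u τ (y, t)) x‖ * τ ^ ((1:ℝ) - α) ≤ K := by
      rw [mul_comm]; linarith
    have hp : 0 < τ ^ ((1:ℝ) - α) := Real.rpow_pos_of_pos hτ _
    have h3 := (le_div_iff₀ hp).mpr h1
    rwa [div_eq_mul_inv, ← Real.rpow_neg hτ.le, neg_sub] at h3
  have htime : ∀ τ : ℝ, 0 < τ → ∀ x : EuclideanSpace ℝ (Fin d), ∀ t : ℝ,
      |deriv (fun s => pmoll d ρ u τ (x, s)) t| ≤ K * τ ^ (α - 2) := by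
    intro τ hτ x t
    have h := HK τ hτ (x, t) (x, t)
    have h2 : 0 ≤ τ ^ ((1:ℝ) - α) * ‖fderiv ℝ (fun y => pmoll d ρ u τ (y, t)) x‖ :=
      mul_nonneg (Real.rpow_nonneg hτ.le _) (norm_nonneg _)
    have h1 : |deriv (fun s => pmoll d ρ u τ (x, s)) t| * τ ^ ((2:ℝ) - α) ≤ K := by
      rw [mul_comm]; linarith
    have hp : 0 < τ ^ ((2:ℝ) - α) := Real.rpow_pos_of_pos hτ _
    have h3 := (le_div_iff₀ hp).mpr h1
    rwa [div_eq_mul_inv, ← Real.rpow_neg hτ.le, neg_sub] at h3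
  have hsm : ∀ τ : ℝ, 0 < τ → ContDiff ℝ ∞ (pmoll d ρ u τ) := fun τ hτ =>
    pmoll_contDiff hρ_smooth hρ_cpt hu hτ
  -- Lipschitz estimates for mollifications
  have hLip : ∀ τ : ℝ, 0 < τ → ∀ p q : EuclideanSpace ℝ (Fin d) × ℝ,
      |pmoll d ρ u τ p - pmoll d ρ u τ q| ≤
        K * τ ^ (α - 1) * ‖p.1 - q.1‖ + K * τ ^ (α - 2) * |p.2 - q.2| := by
    intro τ hτ p q
    have hdall : Differentiable ℝ (pmoll d ρ u τ) :=
      (hsm τ hτ).differentiable (by simp)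
    have hsp : ∀ t : ℝ, ∀ a b : EuclideanSpace ℝ (Fin d),
        |pmoll d ρ u τ (b, t) - pmoll d ρ u τ (a, t)| ≤ K * τ ^ (α - 1) * ‖b - a‖ := by
      intro t a b
      have hdiff : ∀ x ∈ Set.univ, DifferentiableAt ℝ (fun y => pmoll d ρ u τ (y, t)) x := by
        intro x _
        have h : DifferentiableAt ℝ (pmoll d ρ u τ ∘ fun y : EuclideanSpace ℝ (Fin d) => (y, t)) x :=
          DifferentiableAt.comp x (hdall (x, t))
            (differentiableAt_id.prodMk (differentiableAt_const t))
        exact h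
      have := convex_univ.norm_image_sub_le_of_norm_fderiv_le hdiff
        (fun x _ => hgrad τ hτ x t) (Set.mem_univ a) (Set.mem_univ b)
      simpa [Real.norm_eq_abs] using this
    have htm : ∀ x : EuclideanSpace ℝ (Fin d), ∀ a b : ℝ,
        |pmoll d ρ u τ (x, b) - pmoll d ρ u τ (x, a)| ≤ K * τ ^ (α - 2) * |b - a| := by
      intro x a b
      have hdiff : ∀ s ∈ Set.univ, DifferentiableAt ℝ (fun s => pmoll d ρ u τ (x, s)) s := by
        intro s _
        have h : DifferentiableAt ℝ (pmoll d ρ u τ ∘ fun s : ℝ => (x, s)) s :=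
          DifferentiableAt.comp s (hdall (x, s))
            ((differentiableAt_const x).prodMk differentiableAt_id)
        exact h
      have := convex_univ.norm_image_sub_le_of_norm_deriv_le hdiff
        (fun s _ => htime τ hτ x s) (Set.mem_univ a) (Set.mem_univ b)
      simpa [Real.norm_eq_abs] using this
    calc |pmoll d ρ u τ p - pmoll d ρ u τ q|
        ≤ |pmoll d ρ u τ (p.1, p.2) - pmoll d ρ u τ (q.1, p.2)|
          + |pmoll d ρ u τ (q.1, p.2) - pmoll d ρ u τ (q.1, q.2)| := abs_sub_le _ _ _
      _ ≤ K * τ ^ (α - 1) * ‖p.1 - q.1‖ + K * τ ^ (α - 2) * |p.2 - q.2| :=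
          add_le_add (hsp p.2 q.1 p.1) (htm q.1 q.2 p.2)
  -- gap estimate between consecutive dyadic scales
  have hgap : ∀ τ : ℝ, 0 < τ → ∀ p : EuclideanSpace ℝ (Fin d) × ℝ,
      |pmoll d ρ u (2*τ) p - pmoll d ρ u τ p| ≤ 8 * I * R * K * τ ^ α := by
    intro τ hτ p
    have hσ : (0:ℝ) < 2*τ := by linarith
    have hcont1 : Continuous (pmoll d ρ u (2*τ)) := (hsm _ hσ).continuous
    have hcont2 : Continuous (pmoll d ρ u τ) := (hsm _ hτ).continuous
    have f1 : (2*τ) ^ (α-1) ≤ τ ^ (α-1) :=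
      Real.rpow_le_rpow_of_nonpos hτ (by linarith) (by linarith)
    have f2 : (2*τ) ^ (α-2) ≤ τ ^ (α-2) :=
      Real.rpow_le_rpow_of_nonpos hτ (by linarith) (by linarith)
    have g1 : τ ^ (α-1) * τ = τ ^ α := by
      have h := Real.rpow_add_one hτ.ne' (α-1)
      rw [show α-1+1 = α by ring] at h
      exact h.symm
    have g2 : τ ^ (α-2) * τ ^ (2:ℕ) = τ ^ α := by
      rw [← Real.rpow_natCast τ 2, ← Real.rpow_add hτ]
      norm_num
    have e1 : |(∫ z, smol d ρ τ z * pmoll d ρ u (2*τ) (p - z)) - pmoll d ρ u (2*τ) p|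
        ≤ I * (K * τ^(α-1) * (τ*R) + K * τ^(α-2) * (τ^2*R)) := by
      apply near_est hρ_smooth hρ_cpt hρ_int hτ hcont1 p
      intro z hz
      obtain ⟨hz1, hz2⟩ := hRsup hτ z hz
      have hl := hLip (2*τ) hσ (p - z) p
      simp only [Prod.fst_sub, Prod.snd_sub, sub_sub_cancel_left, norm_neg, abs_neg] at hl
      have b1 : K * (2*τ)^(α-1) * ‖z.1‖ ≤ K * τ^(α-1) * (τ*R) :=
        mul_le_mul (mul_le_mul_of_nonneg_left f1 hK0) hz1 (norm_nonneg _)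
          (mul_nonneg hK0 (Real.rpow_nonneg hτ.le _))
      have b2 : K * (2*τ)^(α-2) * |z.2| ≤ K * τ^(α-2) * (τ^2*R) :=
        mul_le_mul (mul_le_mul_of_nonneg_left f2 hK0) hz2 (abs_nonneg _)
          (mul_nonneg hK0 (Real.rpow_nonneg hτ.le _))
      linarith
    have e2 : |(∫ z, smol d ρ (2*τ) z * pmoll d ρ u τ (p - z)) - pmoll d ρ u τ p|
        ≤ I * (K * τ^(α-1) * ((2*τ)*R) + K * τ^(α-2) * ((2*τ)^2*R)) := by
      apply near_est hρ_smooth hρ_cpt hρ_int hσ hcont2 p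
      intro z hz
      obtain ⟨hz1, hz2⟩ := hRsup hσ z hz
      have hl := hLip τ hτ (p - z) p
      simp only [Prod.fst_sub, Prod.snd_sub, sub_sub_cancel_left, norm_neg, abs_neg] at hl
      have b1 : K * τ^(α-1) * ‖z.1‖ ≤ K * τ^(α-1) * ((2*τ)*R) :=
        mul_le_mul_of_nonneg_left hz1 (mul_nonneg hK0 (Real.rpow_nonneg hτ.le _))
      have b2 : K * τ^(α-2) * |z.2| ≤ K * τ^(α-2) * ((2*τ)^2*R) :=
        mul_le_mul_of_nonneg_left hz2 (mul_nonneg hK0 (Real.rpow_nonneg hτ.le _))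
      linarith
    have hc := pmoll_comm hρ_smooth hρ_cpt hu hσ hτ p
    have tri : |pmoll d ρ u (2*τ) p - pmoll d ρ u τ p|
        ≤ |pmoll d ρ u (2*τ) p - ∫ z, smol d ρ τ z * pmoll d ρ u (2*τ) (p - z)|
          + |(∫ z, smol d ρ (2*τ) z * pmoll d ρ u τ (p - z)) - pmoll d ρ u τ p| := by
      have h := abs_sub_le (pmoll d ρ u (2*τ) p)
        (∫ z, smol d ρ τ z * pmoll d ρ u (2*τ) (p - z)) (pmoll d ρ u τ p)
      nth_rewrite 2 [← hc] at h
      exact h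
    have efin : I * (K * τ^(α-1) * (τ*R) + K * τ^(α-2) * (τ^2*R))
        + I * (K * τ^(α-1) * ((2*τ)*R) + K * τ^(α-2) * ((2*τ)^2*R))
        = 8 * I * R * K * τ ^ α := by
      calc I * (K * τ^(α-1) * (τ*R) + K * τ^(α-2) * (τ^2*R))
          + I * (K * τ^(α-1) * ((2*τ)*R) + K * τ^(α-2) * ((2*τ)^2*R))
          = 3*(I*K*R)*(τ^(α-1)*τ) + 5*(I*K*R)*(τ^(α-2)*τ^(2:ℕ)) := by push_cast; ring
        _ = 8 * I * R * K * τ ^ α := by rw [g1, g2]; ring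
    rw [abs_sub_comm _ (pmoll d ρ u (2*τ) p)] at e1
    linarith
  -- telescoping over dyadic scales
  have htel : ∀ r : ℝ, 0 < r → ∀ p : EuclideanSpace ℝ (Fin d) × ℝ, ∀ n : ℕ,
      |pmoll d ρ u r p - pmoll d ρ u (r / 2 ^ n) p| ≤ C1 * K * r ^ α := by
    intro r hr p n
    have key : ∀ n : ℕ, |pmoll d ρ u r p - pmoll d ρ u (r / 2 ^ n) p|
        ≤ 8 * I * R * K * r ^ α * ∑ k ∈ Finset.range n, Q ^ (k + 1) := by
      intro n
      induction n with
      | zero => simp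
      | succ n ih =>
        have hτ : (0:ℝ) < r / 2 ^ (n+1) := by positivity
        have h2 : 2 * (r / 2 ^ (n+1)) = r / 2 ^ n := by
          field_simp
          ring
        have hg := hgap (r / 2 ^ (n+1)) hτ p
        rw [h2] at hg
        have hpow : ((2:ℝ) ^ (n+1)) ^ α = ((2:ℝ) ^ α) ^ (n+1) := by
          rw [← Real.rpow_natCast (2:ℝ) (n+1), ← Real.rpow_mul (by norm_num : (0:ℝ) ≤ 2),
            mul_comm, Real.rpow_mul (by norm_num : (0:ℝ) ≤ 2), Real.rpow_natCast]
        have hq : (r / 2 ^ (n+1)) ^ α = r ^ α * Q ^ (n+1) := by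
          rw [Real.div_rpow hr.le (by positivity), hpow, div_eq_mul_inv, ← inv_pow, hQdef]
        calc |pmoll d ρ u r p - pmoll d ρ u (r / 2 ^ (n+1)) p|
            ≤ |pmoll d ρ u r p - pmoll d ρ u (r / 2 ^ n) p|
              + |pmoll d ρ u (r / 2 ^ n) p - pmoll d ρ u (r / 2 ^ (n+1)) p| := abs_sub_le _ _ _
          _ ≤ 8 * I * R * K * r ^ α * ∑ k ∈ Finset.range n, Q ^ (k + 1)
              + 8 * I * R * K * (r / 2 ^ (n+1)) ^ α := add_le_add ih hg
          _ = 8 * I * R * K * r ^ α * ∑ k ∈ Finset.range (n+1), Q ^ (k + 1) := by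
              rw [hq, Finset.sum_range_succ]; ring
    have h8 : 0 ≤ 8 * I * R * K * r ^ α :=
      mul_nonneg (by positivity) (Real.rpow_nonneg hr.le _)
    calc |pmoll d ρ u r p - pmoll d ρ u (r / 2 ^ n) p|
        ≤ 8 * I * R * K * r ^ α * ∑ k ∈ Finset.range n, Q ^ (k + 1) := key n
      _ ≤ 8 * I * R * K * r ^ α * S := by
          rw [hSdef]
          exact mul_le_mul_of_nonneg_left (geo_aux hQ0 hQ1 n) h8
      _ = C1 * K * r ^ α := by rw [hC1def]; ring
  -- convergence of mollifications
  have hconv : ∀ p : EuclideanSpace ℝ (Fin d) × ℝ, ∀ r : ℝ, 0 < r →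
      |u p - pmoll d ρ u r p| ≤ C1 * K * r ^ α := by
    intro p r hr
    refine le_of_forall_pos_le_add ?_
    intro ε hε
    have hε' : 0 < ε / I := by positivity
    obtain ⟨δ, hδ0, hδ⟩ := Metric.continuousAt_iff.mp (hu.continuousAt (x := p)) (ε/I) hε'
    have hmin : 0 < min 1 (δ / R) := lt_min one_pos (by positivity)
    obtain ⟨n, hn⟩ := pow_unbounded_of_one_lt (r / min 1 (δ / R)) (one_lt_two (α := ℝ))
    set τ := r / 2 ^ n with hτdef
    have hτ0 : 0 < τ := by positivity
    have hτm : τ < min 1 (δ / R) := by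
      rw [hτdef, div_lt_iff₀ (by positivity)]
      rw [div_lt_iff₀ hmin] at hn
      linarith [hn]
    have hτ1 : τ ≤ 1 := le_of_lt (lt_of_lt_of_le hτm (min_le_left _ _))
    have hτδ : τ * R < δ := by
      have h := lt_of_lt_of_le hτm (min_le_right _ _)
      rwa [lt_div_iff₀ hR0] at h
    have e : |(∫ z, smol d ρ τ z * u (p - z)) - u p| ≤ I * (ε / I) := by
      apply near_est hρ_smooth hρ_cpt hρ_int hτ0 hu p
      intro z hz
      obtain ⟨hz1, hz2⟩ := hRsup hτ0 z hz
      have hd : dist (p - z) p < δ := by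
        rw [dist_eq_norm, sub_sub_cancel_left, norm_neg, Prod.norm_def]
        apply max_lt
        · exact lt_of_le_of_lt hz1 hτδ
        · have h2 : |z.2| ≤ τ * R := le_trans hz2 (by
            nlinarith [mul_nonneg (mul_nonneg hτ0.le hR0.le) (sub_nonneg.mpr hτ1)])
          exact lt_of_le_of_lt h2 hτδ
      have := hδ hd
      rw [Real.dist_eq] at this
      exact le_of_lt this
    rw [← pmoll_eq_int hu τ p] at e
    have emain : |u p - pmoll d ρ u τ p| ≤ ε := by
      rw [abs_sub_comm]
      calc |pmoll d ρ u τ p - u p| ≤ I * (ε / I) := e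
        _ = ε := by field_simp
    calc |u p - pmoll d ρ u r p|
        ≤ |u p - pmoll d ρ u τ p| + |pmoll d ρ u τ p - pmoll d ρ u r p| := abs_sub_le _ _ _
      _ ≤ ε + C1 * K * r ^ α := add_le_add emain (by
          rw [abs_sub_comm]; exact htel r hr p n)
      _ = C1 * K * r ^ α + ε := by ring
  -- conclusion
  intro X Y
  set r := pdistP d X Y with hrdef
  have hr0 : 0 ≤ r := le_trans (norm_nonneg _) (le_max_left _ _)
  rcases eq_or_lt_of_le hr0 with hr | hr
  · have h1 : ‖X.1 - Y.1‖ = 0 := le_antisymm (le_trans (le_max_left _ _) hr.ge) (norm_nonneg _)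
    have h2 : Real.sqrt |X.2 - Y.2| = 0 :=
      le_antisymm (le_trans (le_max_right _ _) hr.ge) (Real.sqrt_nonneg _)
    have hx : X.1 = Y.1 := by rwa [norm_sub_eq_zero_iff] at h1
    have ht : X.2 = Y.2 := by
      have h3 := (Real.sqrt_eq_zero (abs_nonneg _)).mp h2
      rw [abs_eq_zero, sub_eq_zero] at h3
      exact h3
    have hXY : X = Y := Prod.ext hx ht
    rw [hXY, sub_self, abs_zero, ← hr, Real.zero_rpow (ne_of_gt hα0), mul_zero]
  · have hx1 : ‖X.1 - Y.1‖ ≤ r := le_max_left _ _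
    have ht1 : |X.2 - Y.2| ≤ r ^ 2 := by
      have hs : Real.sqrt |X.2 - Y.2| ≤ r := le_max_right _ _
      nlinarith [Real.sq_sqrt (abs_nonneg (X.2 - Y.2)), Real.sqrt_nonneg |X.2 - Y.2|]
    have g1 : r ^ (α-1) * r = r ^ α := by
      have h := Real.rpow_add_one (ne_of_gt hr) (α-1)
      rw [show α-1+1 = α by ring] at h
      exact h.symm
    have g2 : r ^ (α-2) * r ^ (2:ℕ) = r ^ α := by
      rw [← Real.rpow_natCast r 2, ← Real.rpow_add hr]
      norm_num
    have hmid := hLip r hr X Y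
    have hA := hconv X r hr
    have hB := hconv Y r hr
    have hbound : K * r^(α-1) * ‖X.1-Y.1‖ + K * r^(α-2) * |X.2-Y.2| ≤ 2 * K * r ^ α := by
      have b1 : K * r^(α-1) * ‖X.1-Y.1‖ ≤ K * r^(α-1) * r :=
        mul_le_mul_of_nonneg_left hx1 (mul_nonneg hK0 (Real.rpow_nonneg hr.le _))
      have b2 : K * r^(α-2) * |X.2-Y.2| ≤ K * r^(α-2) * r^2 :=
        mul_le_mul_of_nonneg_left ht1 (mul_nonneg hK0 (Real.rpow_nonneg hr.le _))
      have e1 : K * r^(α-1) * r = K * r^α := by rw [mul_assoc, g1]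
      have e2 : K * r^(α-2) * r^2 = K * r^α := by rw [mul_assoc, g2]
      linarith
    calc |u X - u Y|
        ≤ |u X - pmoll d ρ u r X| + |pmoll d ρ u r X - u Y| := abs_sub_le _ _ _
      _ ≤ |u X - pmoll d ρ u r X| + (|pmoll d ρ u r X - pmoll d ρ u r Y|
          + |pmoll d ρ u r Y - u Y|) := by
          have := abs_sub_le (pmoll d ρ u r X) (pmoll d ρ u r Y) (u Y)
          linarith
      _ ≤ C1 * K * r ^ α + ((K * r^(α-1) * ‖X.1-Y.1‖ + K * r^(α-2) * |X.2-Y.2|)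
          + C1 * K * r ^ α) := by
          have hB' : |pmoll d ρ u r Y - u Y| ≤ C1 * K * r ^ α := by
            rw [abs_sub_comm]; exact hB
          exact add_le_add hA (add_le_add hmid hB')
      _ ≤ C1 * K * r ^ α + (2 * K * r ^ α + C1 * K * r ^ α) := by linarith
      _ = (2 * C1 + 2) * K * r ^ α := by ring
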